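/- arXiv:math/0211067 — 2 statements merged into one kernel-verified Lean document; each statement's English description precedes it below -/
import Mathlib

section
/- Fix a 1-admissible datum γ for a connected reductive group G (γ a minuscule dominant coweight generating π₁(G) ≅ ℤ, with V^γ faithful and Z(G) a 1-dimensional connected torus). Let ω̌₀ be the generator of the group of weights orthogonal to all coroots normalized by ⟨θ, ω̌₀⟩ = 1, where θ is the image of γ in π₁(G), and for each simple root index i let ω̌ᵢ be the fundamental weight with ⟨w₀(γ), ω̌ᵢ⟩ = 0. Then the semigroup Λ̌⁺_S := { λ̌ ∈ Λ̌⁺ : ⟨w₀(λ), λ̌⟩ ≥ 0 for all λ ∈ Λ⁺_{G,S} } equals the ℤ₊-span of ω̌₀ and the ω̌ᵢ (i ∈ I), where Λ⁺_{G,S} = { μ ∈ Λ⁺ : μ ≤ kγ for some k ≥ 0 }. Moreover Λ⁺_{G,S} = { λ ∈ Λ⁺ : ⟨w₀(λ), λ̌⟩ ≥ 0 for all λ̌ ∈ Λ̌⁺_S }. -/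
open scoped BigOperators

namespace AutSheaf

/-- Coweight/weight lattice realized as `ℤⁿ`. -/
abbrev Lat (n : ℕ) := Fin n → ℤ

/-- The canonical perfect pairing between the coweight lattice and the weight lattice. -/
def pair {n : ℕ} (l w : Lat n) : ℤ := ∑ i, l i * w i

lemma pair_sub_smul {n : ℕ} (a b w : Lat n) (k : ℤ) :
    pair (a - k • b) w = pair a w - k * pair b w := by
  simp [pair, sub_mul, Finset.sum_sub_distrib, Finset.mul_sum, mul_assoc]

/-- Combinatorial (root) datum of a connected reductive group: both the coweight
lattice `Λ` and the weight lattice `Λ̌` are realized as `ℤⁿ`, paired by `pair`;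
`roots` is the (finite) set of roots (living on the weight side), `coroot α` is the
coroot of the root `α` (living on the coweight side), and `simple` enumerates the
simple roots of the chosen Borel. -/
structure RootDatum (n m : ℕ) where
  roots : Finset (Lat n)
  coroot : Lat n → Lat n
  simple : Fin m → Lat n
  simple_mem : ∀ i, simple i ∈ roots
  simple_inj : Function.Injective simple
  root_ne_zero : ∀ α ∈ roots, α ≠ (0 : Lat n)
  neg_mem : ∀ α ∈ roots, -α ∈ roots
  coroot_neg : ∀ α ∈ roots, coroot (-α) = -coroot α
  pair_coroot_self : ∀ α ∈ roots, pair (coroot α) α = 2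
  root_comb : ∀ α ∈ roots,
      (∃ c : Fin m → ℕ, α = ∑ i, (c i : ℤ) • simple i) ∨
      (∃ c : Fin m → ℕ, α = -∑ i, (c i : ℤ) • simple i)
  reflect_mem : ∀ α ∈ roots, ∀ β ∈ roots, β - pair (coroot α) β • α ∈ roots

namespace RootDatum

variable {n m : ℕ} (R : RootDatum n m)

/-- The set of positive roots. -/
noncomputable def posRoots : Finset (Lat n) :=
  @Finset.filter _ (fun α => ∃ c : Fin m → ℕ, α = ∑ i, (c i : ℤ) • R.simple i)
    (Classical.decPred _) R.roots

/-- A coweight is dominant if it pairs nonnegatively with every simple root. -/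
def IsDominant (v : Lat n) : Prop := ∀ i, 0 ≤ pair v (R.simple i)

/-- `v` is a `ℤ₊`-combination of positive coroots. -/
def PosCorootComb (v : Lat n) : Prop :=
  ∃ c : Lat n → ℕ, v = ∑ α ∈ R.posRoots, (c α : ℤ) • R.coroot α

/-- The order on coweights: `a ≤ b` iff `b - a` is a `ℤ₊`-combination of positive
coroots. -/
def cole (a b : Lat n) : Prop := R.PosCorootComb (b - a)

/-- A dominant coweight is minuscule if it is a minimal nonzero element of the set of
dominant coweights for the order `cole`. -/
def Minuscule (g : Lat n) : Prop :=
  R.IsDominant g ∧ g ≠ 0 ∧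
    ∀ v : Lat n, R.IsDominant v → v ≠ 0 → R.cole v g → v = g

/-- The coroot lattice. -/
def corootSpan : Submodule ℤ (Lat n) := Submodule.span ℤ (R.coroot '' ↑R.roots)

/-- The root lattice (inside the weight lattice). -/
def rootSpan : Submodule ℤ (Lat n) := Submodule.span ℤ (↑R.roots : Set (Lat n))

/-- `π₁(G) = Λ / (coroot lattice)`. -/
abbrev Pi1 := Lat n ⧸ R.corootSpan

/-- The projection `Λ → π₁(G)`. -/
def toPi1 (v : Lat n) : R.Pi1 := Submodule.Quotient.mk v

/-- The simple reflection on the coweight lattice, as a function. -/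
def sreflFun (i : Fin m) (v : Lat n) : Lat n :=
  v - pair v (R.simple i) • R.coroot (R.simple i)

lemma sreflFun_invol (i : Fin m) (v : Lat n) : R.sreflFun i (R.sreflFun i v) = v := by
  have h2 : pair (R.coroot (R.simple i)) (R.simple i) = 2 :=
    R.pair_coroot_self _ (R.simple_mem i)
  have hp : pair (R.sreflFun i v) (R.simple i) = -pair v (R.simple i) := by
    rw [sreflFun, pair_sub_smul, h2]; ring
  rw [sreflFun, hp]
  unfold sreflFun
  module

/-- The simple reflection on the coweight lattice. -/
def srefl (i : Fin m) : Equiv.Perm (Lat n) :=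
  ⟨R.sreflFun i, R.sreflFun i, R.sreflFun_invol i, R.sreflFun_invol i⟩

/-- The Weyl group, acting on the coweight lattice. -/
def weyl : Subgroup (Equiv.Perm (Lat n)) := Subgroup.closure (Set.range R.srefl)

/-- The Weyl orbit of a coweight. -/
def orbit (g : Lat n) : Set (Lat n) := {v | ∃ w ∈ R.weyl, w g = v}

/-- `V^γ` is a faithful representation of the dual group `Ǧ` iff its set of weights
(which, for minuscule `γ`, is the Weyl orbit of `γ`) generates the full lattice `Λ`. -/
def FaithfulHW (g : Lat n) : Prop := Submodule.span ℤ (R.orbit g) = ⊤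

/-- `{γ}` is a 1-admissible datum: the center `Z(G)` is a 1-dimensional connected
torus (i.e. `Λ̌/(root lattice) ≅ ℤ`), `π₁(G) ≅ ℤ`, `γ` is a minuscule dominant coweight
whose image generates `π₁(G)`, and `V^γ` is faithful. -/
def IsOneAdmissible (g : Lat n) : Prop :=
  Nonempty ((Lat n ⧸ R.rootSpan) ≃ₗ[ℤ] ℤ) ∧
  Nonempty (R.Pi1 ≃ₗ[ℤ] ℤ) ∧
  R.Minuscule g ∧
  (∀ x : R.Pi1, ∃ k : ℤ, x = k • R.toPi1 g) ∧
  R.FaithfulHW g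

/-- `Λ⁺_{G,S} = { μ ∈ Λ⁺ : μ ≤ kγ for some k ≥ 0 }`. -/
def LamGS (g : Lat n) : Set (Lat n) :=
  {v | R.IsDominant v ∧ ∃ k : ℕ, R.cole v (k • g)}

/-- A weight is dominant if it pairs nonnegatively with every simple coroot. -/
def IsDominantWeight (lc : Lat n) : Prop := ∀ i, 0 ≤ pair (R.coroot (R.simple i)) lc

/-- `Λ̌⁺_S = { λ̌ ∈ Λ̌⁺ : ⟨w₀(λ), λ̌⟩ ≥ 0 for all λ ∈ Λ⁺_{G,S} }`. -/
def LamCheckS (g : Lat n) (w0 : Equiv.Perm (Lat n)) : Set (Lat n) :=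
  {lc | R.IsDominantWeight lc ∧ ∀ v ∈ R.LamGS g, 0 ≤ pair (w0 v) lc}

section Levi

variable (IM : Set (Fin m))

/-- A coweight is `M`-dominant for the standard Levi `M` attached to `IM ⊂ I` if it
pairs nonnegatively with the simple roots from `IM`. -/
def IsMDominant (v : Lat n) : Prop := ∀ i ∈ IM, 0 ≤ pair v (R.simple i)

/-- The positive roots of the standard Levi `M`. -/
noncomputable def posRootsM : Finset (Lat n) :=
  @Finset.filter _ (fun α => α ∈ Submodule.span ℤ (R.simple '' IM))
    (Classical.decPred _) R.posRoots

/-- `v` is a `ℤ₊`-combination of positive coroots of `M`. -/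
def PosCorootCombM (v : Lat n) : Prop :=
  ∃ c : Lat n → ℕ, v = ∑ α ∈ R.posRootsM IM, (c α : ℤ) • R.coroot α

/-- The order on coweights generated by the positive coroots of `M`. -/
def coleM (a b : Lat n) : Prop := R.PosCorootCombM IM (b - a)

/-- Minuscule dominant coweight for the Levi `M`. -/
def MinusculeM (g : Lat n) : Prop :=
  R.IsMDominant IM g ∧ g ≠ 0 ∧
    ∀ v : Lat n, R.IsMDominant IM v → v ≠ 0 → R.coleM IM v g → v = g

/-- `Λ⁺_{M,S} = { λ ∈ Λ⁺_M : wλ ∈ Λ⁺_{G,S} for some w ∈ W }`. -/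
def LamMS (g : Lat n) : Set (Lat n) :=
  {v | R.IsMDominant IM v ∧ ∃ w ∈ R.weyl, w v ∈ R.LamGS g}

/-- `π₁(M) = Λ_{G,P}`: the quotient of `Λ` by the span of the simple coroots from `IM`. -/
abbrev Pi1M := Lat n ⧸ Submodule.span ℤ ((fun i => R.coroot (R.simple i)) '' IM)

/-- The projection `Λ → π₁(M)`. -/
def toPi1M (v : Lat n) : R.Pi1M IM := Submodule.Quotient.mk v

/-- `Λ^{+,θ}_{M,S}`: elements of `Λ⁺_{M,S}` whose image in `π₁(G)` is `θ`
(the image of `γ`). -/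
def LamThetaMS (g : Lat n) : Set (Lat n) :=
  {v | v ∈ R.LamMS IM g ∧ R.toPi1 v = R.toPi1 g}

end Levi

end RootDatum

end AutSheaf

/-!
Averaging the standard inner product over the finitely many linear maps of the rational root span
that preserve the roots gives an inner product for which every root reflection is orthogonal, so
that `β^∨ = 2β/(β, β)`. Hence coroots of positive roots are nonnegative combinations of simple
coroots, and, the centre being one-dimensional, a rational combination of coroots is determined by
its pairings with the roots. By uniqueness of reflections the Weyl group permutes the coroots
compatibly with the roots; as `w₀` exchanges the dominant and antidominant chambers, both `w₀` and
`w₀⁻¹` send positive coroots to nonpositive combinations of simple coroots.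

If `λ ≤ kγ`, then `⟨w₀λ, ω̌₀⟩ = k` and `⟨w₀λ, ω̌ᵢ⟩ = -⟨w₀(kγ - λ), ω̌ᵢ⟩ ≥ 0`. Conversely,
`{ω̌₀, ω̌ᵢ}` is the basis dual to `{w₀γ, αᵢ^∨}`, so each `λ̌ ∈ Λ̌⁺_S` has the nonnegative
coordinates `⟨w₀γ, λ̌⟩` and `⟨αᵢ^∨, λ̌⟩`; and if `w₀λ` pairs nonnegatively with `ω̌₀` and every
`ω̌ᵢ`, then `λ - kγ` is `w₀⁻¹` of a nonnegative combination of simple coroots, so `λ ≤ kγ`.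
-/

open Module Set Submodule

section InvariantForm

lemma LinearMap.IsOrthogonal.two_mul_apply_eq {R M : Type*} [CommRing R] [AddCommGroup M]
    [Module R M] {B : LinearMap.BilinForm R M} {x : M} {f : Dual R M} (hfx : f x = 2)
    (hB : B.IsOrthogonal (preReflection x f)) (y : M) :
    2 * B y x = f y * B x x := by
  have h := hB y x
  rw [preReflection_apply, preReflection_apply, hfx, two_smul, sub_add_cancel_left] at h
  simp only [map_sub, map_smul, map_neg, LinearMap.sub_apply, LinearMap.smul_apply,
    smul_eq_mul] at h
  linear_combination -h

lemma finite_setOf_linearMap_mapsTo {R M : Type*} [Semiring R] [AddCommMonoid M] [Module R M]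
    {Φ : Set M} (hΦ : Φ.Finite) (hspan : span R Φ = ⊤) :
    {f : M →ₗ[R] M | MapsTo f Φ Φ}.Finite := by
  have : Finite Φ := hΦ.to_subtype
  refine Finite.of_finite_image (f := fun f (x : Φ) ↦ f x) ?_ ?_
  · refine (Set.Finite.pi (t := fun _ : Φ ↦ Φ) fun _ ↦ hΦ).subset ?_
    rintro _ ⟨f, hf, rfl⟩ x -
    exact hf x.2
  · intro f _ g _ hfg
    exact LinearMap.ext_on hspan fun x hx ↦ congr_fun hfg ⟨x, hx⟩

theorem exists_posDef_bilinForm_isOrthogonal {K M : Type*} [CommRing K] [LinearOrder K]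
    [IsStrictOrderedRing K] [AddCommGroup M] [Module K M] (B₀ : LinearMap.BilinForm K M)
    (hB₀ : ∀ x, x ≠ 0 → 0 < B₀ x x) {Φ : Set M} (hΦ : Φ.Finite) (hspan : span K Φ = ⊤) :
    ∃ B : LinearMap.BilinForm K M, (∀ x, x ≠ 0 → 0 < B x x) ∧
      ∀ e : M →ₗ[K] M, MapsTo e Φ Φ → Function.Involutive e → B.IsOrthogonal e := by
  set F := (finite_setOf_linearMap_mapsTo hΦ hspan).toFinset
  have hB₀' (x : M) : 0 ≤ B₀ x x := by
    rcases eq_or_ne x 0 with rfl | hx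
    · simp
    · exact (hB₀ x hx).le
  refine ⟨∑ f ∈ F, B₀.compl₁₂ f f, fun x hx ↦ ?_, fun e he hinv x y ↦ ?_⟩
  · simp only [LinearMap.sum_apply, LinearMap.compl₁₂_apply]
    have h1 : LinearMap.id ∈ F := by simp [F, mapsTo_id]
    calc 0 < B₀ (LinearMap.id x) (LinearMap.id x) := hB₀ x hx
      _ ≤ _ := Finset.single_le_sum (f := fun f : M →ₗ[K] M ↦ B₀ (f x) (f x))
          (fun f _ ↦ hB₀' _) h1
  · simp only [LinearMap.sum_apply, LinearMap.compl₁₂_apply]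
    -- precomposition with the involution `e` permutes `F`
    have hmem : ∀ f ∈ F, f ∘ₗ e ∈ F := fun f hf ↦ by
      simp only [F, Set.Finite.mem_toFinset, mem_ofPred_eq] at hf ⊢
      exact hf.comp he
    have hcomp (f : M →ₗ[K] M) : (f ∘ₗ e) ∘ₗ e = f := by
      ext z
      simp [hinv z]
    exact Finset.sum_nbij' (· ∘ₗ e) (· ∘ₗ e) hmem hmem (fun f _ ↦ hcomp f)
      (fun f _ ↦ hcomp f) fun f _ ↦ rfl

theorem exists_bilinForm_two_mul_apply_eq {K M ι : Type*} [Field K] [LinearOrder K]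
    [IsStrictOrderedRing K] [AddCommGroup M] [Module K M] [Finite ι]
    (B₀ : LinearMap.BilinForm K M) (hB₀ : ∀ x, x ≠ 0 → 0 < B₀ x x) (root : ι → M)
    (coroot : ι → Dual K M) (hrc : ∀ i, coroot i (root i) = 2)
    (hmaps : ∀ i, MapsTo (preReflection (root i) (coroot i)) (range root) (range root)) :
    ∃ B : LinearMap.BilinForm K M, (∀ x ∈ span K (range root), x ≠ 0 → 0 < B x x) ∧
      ∀ i, ∀ x ∈ span K (range root), 2 * B x (root i) = coroot i x * B (root i) (root i) := by
  set V := span K (range root)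
  have hroot (i : ι) : root i ∈ V := subset_span (mem_range_self i)
  obtain ⟨B, hpos, horth⟩ := exists_posDef_bilinForm_isOrthogonal
    (B₀.compl₁₂ V.subtype V.subtype) (fun x hx ↦ hB₀ x (by simpa using hx))
    ((finite_range root).preimage Subtype.val_injective.injOn) span_span_coe_preimage
  obtain ⟨π, hπ⟩ := V.subtype.exists_leftInverse_of_injective V.ker_subtype
  have hπV {x : M} (hx : x ∈ V) : π x = ⟨x, hx⟩ := LinearMap.congr_fun hπ ⟨x, hx⟩
  refine ⟨B.compl₁₂ π π, fun x hx hx0 ↦ ?_, fun i x hx ↦ ?_⟩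
  · simpa [hπV hx] using hpos ⟨x, hx⟩ (by simpa using hx0)
  · have hfx : (coroot i ∘ₗ V.subtype) ⟨root i, hroot i⟩ = 2 := hrc i
    have hmaps' : MapsTo (preReflection (⟨root i, hroot i⟩ : V) (coroot i ∘ₗ V.subtype))
        (Subtype.val ⁻¹' range root) (Subtype.val ⁻¹' range root) := fun y hy ↦ by
      simpa [preReflection_apply] using hmaps i hy
    simpa [hπV hx, hπV (hroot i)] using
      (horth _ hmaps' (involutive_preReflection hfx)).two_mul_apply_eq hfx ⟨x, hx⟩

end InvariantForm

namespace AutSheaf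

section Rationalisation

variable {n : ℕ}

lemma pair_eq_dotProduct (l w : Lat n) : pair l w = l ⬝ᵥ w := rfl

/-- `Λ → Λ ⊗ ℚ`, for the coweight and the weight lattice alike. -/
def toQ : Lat n →+ (Fin n → ℚ) := (Int.castAddHom ℚ).compLeft (Fin n)

@[simp]
lemma toQ_apply (x : Lat n) (i : Fin n) : toQ x i = x i := rfl

lemma toQ_injective : Function.Injective (toQ (n := n)) :=
  fun _ _ h ↦ funext fun i ↦ by simpa using congr_fun h i

@[simp]
lemma toQ_dotProduct_toQ (a b : Lat n) : toQ a ⬝ᵥ toQ b = pair a b := by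
  simp [dotProduct, pair]

lemma toQ_mem_span {s : Set (Lat n)} {x : Lat n} (hx : x ∈ span ℤ s) :
    toQ x ∈ span ℚ (toQ '' s) := by
  have := mem_map_of_mem (f := toQ.toIntLinearMap) hx
  rw [map_span] at this
  exact span_le_restrictScalars ℤ ℚ _ this

lemma eq_zero_of_forall_dotProduct_toQ {y : Fin n → ℚ} (h : ∀ v : Lat n, y ⬝ᵥ toQ v = 0) :
    y = 0 :=
  funext fun i ↦ by simpa [dotProduct, Pi.single_apply] using h (Pi.single i 1)

end Rationalisation

namespace RootDatum

variable {n m : ℕ} {R : RootDatum n m} {γ ω0 : Lat n} {ω : Fin m → Lat n}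
  {w0 : Equiv.Perm (Lat n)}

section Roots

variable (R)

lemma mem_posRoots {α : Lat n} :
    α ∈ R.posRoots ↔ α ∈ R.roots ∧ ∃ c : Fin m → ℕ, α = ∑ i, (c i : ℤ) • R.simple i := by
  classical
  simp [posRoots]

lemma simple_mem_posRoots (j : Fin m) : R.simple j ∈ R.posRoots := by
  classical
  refine R.mem_posRoots.2 ⟨R.simple_mem j, Pi.single j 1, ?_⟩
  simp [Pi.single_apply]

lemma coroot_mem_corootSpan {α : Lat n} (hα : α ∈ R.roots) : R.coroot α ∈ R.corootSpan :=
  subset_span ⟨α, hα, rfl⟩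

lemma mem_corootSpan_of_posCorootComb {x : Lat n} (hx : R.PosCorootComb x) :
    x ∈ R.corootSpan := by
  obtain ⟨c, rfl⟩ := hx
  exact sum_mem fun α hα ↦ smul_mem _ _ (R.coroot_mem_corootSpan (R.mem_posRoots.1 hα).1)

lemma posCorootComb_sum_simple (t : Fin m → ℕ) :
    R.PosCorootComb (∑ j, (t j : ℤ) • R.coroot (R.simple j)) := by
  classical
  refine ⟨fun α ↦ ∑ j, if R.simple j = α then t j else 0, ?_⟩
  simp only [Nat.cast_sum, Nat.cast_ite, Nat.cast_zero, Finset.sum_smul, ite_smul, zero_smul]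
  rw [Finset.sum_comm]
  refine Finset.sum_congr rfl fun j _ ↦ ?_
  rw [Finset.sum_ite_eq, if_pos (R.simple_mem_posRoots j)]

lemma exists_eq_sum_simple {β : Lat n} (hβ : β ∈ R.roots) :
    ∃ z : Fin m → ℤ, β = ∑ i, z i • R.simple i := by
  rcases R.root_comb β hβ with ⟨c, hc⟩ | ⟨c, hc⟩
  · exact ⟨_, hc⟩
  · exact ⟨fun i ↦ -(c i : ℤ), by simp [hc, neg_smul]⟩

lemma srefl_apply (i : Fin m) (v : Lat n) :
    R.srefl i v = v - pair v (R.simple i) • R.coroot (R.simple i) := rfl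

lemma toPi1_zsmul (k : ℤ) (x : Lat n) : R.toPi1 (k • x) = k • R.toPi1 x :=
  Submodule.Quotient.mk_smul _ k x

end Roots

lemma pair_eq_zero_of_mem_corootSpan {ℓ x : Lat n}
    (hℓ : ∀ α ∈ R.roots, pair (R.coroot α) ℓ = 0) (hx : x ∈ R.corootSpan) : pair x ℓ = 0 := by
  simpa [pair_eq_dotProduct] using LinearMap.eqOn_span (f := (dotProductBilin ℤ ℤ).flip ℓ)
    (g := 0) (by rintro _ ⟨α, hα, rfl⟩; simpa [pair_eq_dotProduct] using hℓ α hα) hx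

lemma pair_eq_of_toPi1_eq {ℓ x y : Lat n} (hℓ : ∀ α ∈ R.roots, pair (R.coroot α) ℓ = 0)
    (h : R.toPi1 x = R.toPi1 y) : pair x ℓ = pair y ℓ := by
  have := pair_eq_zero_of_mem_corootSpan hℓ ((Submodule.Quotient.eq _).1 h)
  rwa [pair_eq_dotProduct, sub_dotProduct, sub_eq_zero] at this

lemma IsDominant.pair_nonneg {v β : Lat n} (hv : R.IsDominant v) (hβ : β ∈ R.posRoots) :
    0 ≤ pair v β := by
  obtain ⟨-, c, rfl⟩ := R.mem_posRoots.1 hβ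
  rw [pair_eq_dotProduct, dotProduct_sum]
  exact Finset.sum_nonneg fun j _ ↦ by
    rw [dotProduct_smul, smul_eq_mul]
    exact mul_nonneg (by positivity) (hv j)

lemma pair_pos_of_mem_posRoots {v β : Lat n} (hv : ∀ j, 0 < pair v (R.simple j))
    (hβ : β ∈ R.posRoots) : 0 < pair v β := by
  obtain ⟨hβ, c, rfl⟩ := R.mem_posRoots.1 hβ
  obtain ⟨i, hi⟩ : ∃ i, c i ≠ 0 := by
    by_contra! h
    exact R.root_ne_zero _ hβ (by simp [h])
  rw [pair_eq_dotProduct, dotProduct_sum]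
  refine Finset.sum_pos' (fun j _ ↦ ?_) ⟨i, Finset.mem_univ i, ?_⟩
  · rw [dotProduct_smul, smul_eq_mul]
    exact mul_nonneg (by positivity) (hv j).le
  · rw [dotProduct_smul, smul_eq_mul]
    exact mul_pos (by positivity) (hv i)

lemma pair_lt_pair_of_mem_posRoots {x y a b : Lat n} (hx : ∀ j, 0 < pair x (R.simple j))
    (hy : R.IsDominant (-y)) (ha : a ∈ R.posRoots) (hb : b ∈ R.posRoots) :
    pair y a < pair x b := by
  have := hy.pair_nonneg ha
  rw [pair_eq_dotProduct, neg_dotProduct, neg_nonneg] at this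
  exact this.trans_lt (pair_pos_of_mem_posRoots hx hb)

section CorootFormula

/-- The familiar `β^∨ = 2β/(β, β)`, for a form which is positive definite on the rational root
span. -/
lemma exists_rootForm (R : RootDatum n m) : ∃ B : LinearMap.BilinForm ℚ (Fin n → ℚ),
    (∀ x ∈ span ℚ (toQ '' R.roots), x ≠ 0 → 0 < B x x) ∧
    ∀ β ∈ R.roots, ∀ x ∈ span ℚ (toQ '' R.roots),
      2 * B x (toQ β) = toQ (R.coroot β) ⬝ᵥ x * B (toQ β) (toQ β) := by
  have hrange : range (fun β : R.roots ↦ toQ (β : Lat n)) = toQ '' R.roots := by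
    ext
    simp
  have hmaps (β : R.roots) : MapsTo (preReflection (toQ (β : Lat n))
      (dotProductBilin ℚ ℚ (toQ (R.coroot β)))) (toQ '' R.roots) (toQ '' R.roots) := by
    rintro _ ⟨ρ, hρ, rfl⟩
    refine ⟨_, R.reflect_mem _ β.2 _ hρ, ?_⟩
    rw [map_sub, map_zsmul, preReflection_apply, dotProductBilin_apply_apply,
      toQ_dotProduct_toQ, Int.cast_smul_eq_zsmul]
  obtain ⟨B, hpos, hB⟩ := exists_bilinForm_two_mul_apply_eq (dotProductBilin ℚ ℚ)
    (fun x hx ↦ (Finset.sum_nonneg fun i _ ↦ mul_self_nonneg (x i)).lt_of_ne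
      (Ne.symm (dotProduct_self_eq_zero.not.2 hx))) (fun β : R.roots ↦ toQ (β : Lat n))
    (fun β ↦ dotProductBilin ℚ ℚ (toQ (R.coroot β)))
    (fun β ↦ by simp [R.pair_coroot_self _ β.2]) (by rwa [hrange])
  rw [hrange] at hpos hB
  exact ⟨B, hpos, fun β hβ ↦ by simpa using hB ⟨β, hβ⟩⟩

lemma eq_zero_of_mem_rootSpan {ℓ : Lat n} (hℓ : ∀ α ∈ R.roots, pair (R.coroot α) ℓ = 0)
    (hmem : ℓ ∈ R.rootSpan) : ℓ = 0 := by
  obtain ⟨B, hpos, hB⟩ := R.exists_rootForm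
  have hspan := toQ_mem_span hmem
  have hB0 : B (toQ ℓ) (toQ ℓ) = 0 := LinearMap.eqOn_span (f := B (toQ ℓ)) (g := 0)
    (by rintro _ ⟨β, hβ, rfl⟩; simpa [hℓ β hβ] using hB β hβ _ hspan) hspan
  by_contra hne
  exact (hpos _ hspan ((map_ne_zero_iff _ toQ_injective).2 hne)).ne' hB0

variable (R) in
def RootsSeparateCoroots : Prop :=
  ∀ y ∈ span ℚ (toQ '' (R.coroot '' R.roots)), (∀ β ∈ R.roots, y ⬝ᵥ toQ β = 0) → y = 0

lemma rootsSeparateCoroots_of_linearEquiv (Z : (Lat n ⧸ R.rootSpan) ≃ₗ[ℤ] ℤ) {ℓ : Lat n}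
    (hℓ0 : ℓ ≠ 0) (hℓ : ∀ α ∈ R.roots, pair (R.coroot α) ℓ = 0) : R.RootsSeparateCoroots := by
  intro y hy hyroot
  obtain ⟨e, he⟩ : ∃ e, Z (Submodule.Quotient.mk e) = 1 := by
    obtain ⟨q, hq⟩ := Z.surjective 1
    obtain ⟨e, rfl⟩ := Submodule.Quotient.mk_surjective _ q
    exact ⟨e, hq⟩
  have hyℓ : y ⬝ᵥ toQ ℓ = 0 := by
    simpa using LinearMap.eqOn_span (f := (dotProductBilin ℚ ℚ).flip (toQ ℓ)) (g := 0)
      (by rintro _ ⟨_, ⟨α, hα, rfl⟩, rfl⟩; simpa using hℓ α hα) hy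
  -- `v - Z v • e` lies in the root lattice, which `y` annihilates
  have hye (v : Lat n) : y ⬝ᵥ toQ v = Z (Submodule.Quotient.mk v) * (y ⬝ᵥ toQ e) := by
    have hv : v - Z (Submodule.Quotient.mk v) • e ∈ R.rootSpan := by
      rw [← Submodule.Quotient.mk_eq_zero, ← Z.map_eq_zero_iff, Submodule.Quotient.mk_sub,
        Submodule.Quotient.mk_smul, map_sub, map_smul, he, smul_eq_mul, mul_one, sub_self]
    have := LinearMap.eqOn_span (f := dotProductBilin ℚ ℚ y) (g := 0)
      (by rintro _ ⟨β, hβ, rfl⟩; simpa using hyroot β hβ) (toQ_mem_span hv)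
    rwa [LinearMap.zero_apply, dotProductBilin_apply_apply, map_sub, map_zsmul, dotProduct_sub,
      dotProduct_smul, zsmul_eq_mul, sub_eq_zero] at this
  have hZℓ : Z (Submodule.Quotient.mk ℓ) ≠ 0 := fun h ↦ hℓ0 <|
    eq_zero_of_mem_rootSpan hℓ ((Submodule.Quotient.mk_eq_zero _).1 (Z.map_eq_zero_iff.1 h))
  rw [hye] at hyℓ
  have he0 : y ⬝ᵥ toQ e = 0 := (mul_eq_zero.1 hyℓ).resolve_left (by exact_mod_cast hZℓ)
  exact eq_zero_of_forall_dotProduct_toQ fun v ↦ by rw [hye, he0, mul_zero]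

lemma exists_toQ_coroot_eq_sum (hR : R.RootsSeparateCoroots) {β : Lat n} (hβ : β ∈ R.roots)
    {z : Fin m → ℤ} (hz : β = ∑ i, z i • R.simple i) :
    ∃ r : Fin m → ℚ, (∀ i, 0 < r i) ∧
      toQ (R.coroot β) = ∑ i, (z i * r i) • toQ (R.coroot (R.simple i)) := by
  obtain ⟨B, hpos, hB⟩ := R.exists_rootForm
  have hmem {ρ : Lat n} (hρ : ρ ∈ R.roots) : toQ ρ ∈ span ℚ (toQ '' R.roots) :=
    subset_span ⟨ρ, hρ, rfl⟩
  have hlen {ρ : Lat n} (hρ : ρ ∈ R.roots) : 0 < B (toQ ρ) (toQ ρ) :=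
    hpos _ (hmem hρ) ((map_ne_zero_iff _ toQ_injective).2 (R.root_ne_zero ρ hρ))
  refine ⟨fun i ↦ B (toQ (R.simple i)) (toQ (R.simple i)) / B (toQ β) (toQ β),
    fun i ↦ div_pos (hlen (R.simple_mem i)) (hlen hβ), ?_⟩
  have hcoroot {ρ : Lat n} (hρ : ρ ∈ R.roots) :
      toQ (R.coroot ρ) ∈ span ℚ (toQ '' (R.coroot '' R.roots)) :=
    subset_span ⟨_, ⟨ρ, hρ, rfl⟩, rfl⟩
  rw [← sub_eq_zero]
  refine hR _ (sub_mem (hcoroot hβ) (sum_mem fun i _ ↦ smul_mem _ _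
    (hcoroot (R.simple_mem i)))) fun ρ hρ ↦ ?_
  have hBβ : B (toQ ρ) (toQ β) = ∑ i, (z i : ℚ) * B (toQ ρ) (toQ (R.simple i)) := by
    rw [hz, map_sum, map_sum]
    simp only [map_zsmul]
    simp only [zsmul_eq_mul]
  have key : toQ (R.coroot β) ⬝ᵥ toQ ρ * B (toQ β) (toQ β) = ∑ i, z i *
      (toQ (R.coroot (R.simple i)) ⬝ᵥ toQ ρ * B (toQ (R.simple i)) (toQ (R.simple i))) := by
    rw [← hB β hβ _ (hmem hρ), hBβ, Finset.mul_sum]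
    refine Finset.sum_congr rfl fun i _ ↦ ?_
    rw [← hB _ (R.simple_mem i) _ (hmem hρ)]
    ring
  rw [sub_dotProduct, sum_dotProduct, sub_eq_zero, ← mul_left_inj' (hlen hβ).ne', key,
    Finset.sum_mul]
  refine Finset.sum_congr rfl fun i _ ↦ ?_
  rw [smul_dotProduct, smul_eq_mul]
  field_simp [(hlen hβ).ne']

lemma cast_pair_ω_eq_of_toQ_eq_sum
    (hω : ∀ i j, pair (R.coroot (R.simple j)) (ω i) = if i = j then 1 else 0)
    {x : Lat n} {q : Fin m → ℚ} (hx : toQ x = ∑ i, q i • toQ (R.coroot (R.simple i)))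
    (j : Fin m) : (pair x (ω j) : ℚ) = q j := by
  rw [← toQ_dotProduct_toQ, hx, sum_dotProduct]
  simp [smul_dotProduct, hω]

lemma coroot_eq_sum_pair_ω (hR : R.RootsSeparateCoroots)
    (hω : ∀ i j, pair (R.coroot (R.simple j)) (ω i) = if i = j then 1 else 0)
    {β : Lat n} (hβ : β ∈ R.roots) :
    R.coroot β = ∑ i, pair (R.coroot β) (ω i) • R.coroot (R.simple i) := by
  obtain ⟨z, hz⟩ := R.exists_eq_sum_simple hβ
  obtain ⟨r, -, hr⟩ := exists_toQ_coroot_eq_sum hR hβ hz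
  apply toQ_injective
  rw [map_sum, hr]
  refine Finset.sum_congr rfl fun i _ ↦ ?_
  rw [map_zsmul, ← Int.cast_smul_eq_zsmul ℚ, cast_pair_ω_eq_of_toQ_eq_sum hω hr]

lemma pair_coroot_ω_nonneg (hR : R.RootsSeparateCoroots)
    (hω : ∀ i j, pair (R.coroot (R.simple j)) (ω i) = if i = j then 1 else 0)
    {β : Lat n} (hβ : β ∈ R.posRoots) (j : Fin m) : 0 ≤ pair (R.coroot β) (ω j) := by
  obtain ⟨hβ, c, hc⟩ := R.mem_posRoots.1 hβ
  obtain ⟨r, hr0, hr⟩ := exists_toQ_coroot_eq_sum hR hβ hc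
  have := cast_pair_ω_eq_of_toQ_eq_sum hω hr j
  have : (0 : ℚ) ≤ pair (R.coroot β) (ω j) := this ▸ mul_nonneg (by positivity) (hr0 j).le
  exact_mod_cast this

lemma pair_coroot_ω_nonpos (hR : R.RootsSeparateCoroots)
    (hω : ∀ i j, pair (R.coroot (R.simple j)) (ω i) = if i = j then 1 else 0)
    {β : Lat n} (hβ : β ∈ R.roots) (hβ' : β ∉ R.posRoots) (j : Fin m) :
    pair (R.coroot β) (ω j) ≤ 0 := by
  obtain ⟨c, hc⟩ := (R.root_comb β hβ).resolve_left fun h ↦ hβ' (R.mem_posRoots.2 ⟨hβ, h⟩)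
  obtain ⟨r, hr0, hr⟩ := exists_toQ_coroot_eq_sum (z := fun i ↦ -(c i : ℤ)) hR hβ
    (by simp [hc, neg_smul])
  have := cast_pair_ω_eq_of_toQ_eq_sum hω hr j
  have : (pair (R.coroot β) (ω j) : ℚ) ≤ 0 := this ▸ by
    push_cast
    exact mul_nonpos_of_nonpos_of_nonneg (by simp) (hr0 j).le
  exact_mod_cast this

lemma eq_sum_pair_ω_of_mem_corootSpan (hR : R.RootsSeparateCoroots)
    (hω : ∀ i j, pair (R.coroot (R.simple j)) (ω i) = if i = j then 1 else 0)
    {x : Lat n} (hx : x ∈ R.corootSpan) :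
    x = ∑ i, pair x (ω i) • R.coroot (R.simple i) := by
  let L : Lat n →ₗ[ℤ] Lat n := LinearMap.id -
    ∑ i, ((dotProductBilin ℤ ℤ).flip (ω i)).smulRight (R.coroot (R.simple i))
  have := LinearMap.eqOn_span (f := L) (g := 0) (by
    rintro _ ⟨β, hβ, rfl⟩
    simpa [L, sub_eq_zero, pair_eq_dotProduct] using coroot_eq_sum_pair_ω hR hω hβ) hx
  simpa [L, sub_eq_zero, pair_eq_dotProduct] using this

lemma PosCorootComb.pair_ω_nonneg (hR : R.RootsSeparateCoroots)
    (hω : ∀ i j, pair (R.coroot (R.simple j)) (ω i) = if i = j then 1 else 0) {x : Lat n}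
    (hx : R.PosCorootComb x) (i : Fin m) : 0 ≤ pair x (ω i) := by
  obtain ⟨c, rfl⟩ := hx
  rw [pair_eq_dotProduct, sum_dotProduct]
  refine Finset.sum_nonneg fun α hα ↦ ?_
  rw [smul_dotProduct, smul_eq_mul, ← pair_eq_dotProduct]
  exact mul_nonneg (by positivity) (pair_coroot_ω_nonneg hR hω hα i)

end CorootFormula

lemma exists_pair_simple_pos (hR : R.RootsSeparateCoroots)
    (hω : ∀ i j, pair (R.coroot (R.simple j)) (ω i) = if i = j then 1 else 0) :
    ∃ v : Lat n, ∀ j, 0 < pair v (R.simple j) := by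
  let A : Matrix (Fin m) (Fin m) ℤ := .of fun i j ↦ pair (R.coroot (R.simple i)) (R.simple j)
  have hA (c : Fin m → ℤ) (j : Fin m) :
      pair (∑ i, c i • R.coroot (R.simple i)) (R.simple j) = Matrix.vecMul c A j := by
    rw [pair_eq_dotProduct, sum_dotProduct]
    simp only [smul_dotProduct, smul_eq_mul, ← pair_eq_dotProduct]
    rfl
  have hdet : A.det ≠ 0 := by
    intro h0
    obtain ⟨c, hc0, hc⟩ := Matrix.exists_vecMul_eq_zero_iff.2 h0
    set y := ∑ i, c i • R.coroot (R.simple i)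
    have hyβ (β : Lat n) (hβ : β ∈ R.roots) : pair y β = 0 := by
      obtain ⟨z, rfl⟩ := R.exists_eq_sum_simple hβ
      rw [pair_eq_dotProduct, dotProduct_sum]
      refine Finset.sum_eq_zero fun j _ ↦ ?_
      rw [dotProduct_smul, ← pair_eq_dotProduct, hA, hc, Pi.zero_apply, smul_zero]
    have hy : y = 0 := toQ_injective <| by
      rw [map_zero]
      refine hR _ (toQ_mem_span (sum_mem fun i _ ↦ smul_mem _ _
        (R.coroot_mem_corootSpan (R.simple_mem i)))) fun β hβ ↦ ?_
      rw [toQ_dotProduct_toQ, hyβ β hβ, Int.cast_zero]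
    refine hc0 (funext fun i ↦ ?_)
    have := congrArg (pair · (ω i)) hy
    simp only [y, pair_eq_dotProduct, sum_dotProduct, smul_dotProduct, zero_dotProduct] at this
    simpa [← pair_eq_dotProduct, hω] using this
  -- `adjugate A * A = det A • 1`, so `c = det A • (1 ᵥ* adjugate A)` has `c ᵥ* A = det A ^ 2 • 1`
  refine ⟨∑ i, (A.det • Matrix.vecMul 1 A.adjugate) i • R.coroot (R.simple i), fun j ↦ ?_⟩
  rw [hA, Matrix.smul_vecMul, Matrix.vecMul_vecMul, Matrix.adjugate_mul, Matrix.vecMul_smul,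
    Matrix.vecMul_one]
  simpa using mul_self_pos.2 hdet

section Weyl

variable (R) in
structure IsRootAdjoint (w : Equiv.Perm (Lat n)) (ψ : Lat n ≃ₗ[ℤ] Lat n) : Prop where
  pair_apply : ∀ x l, pair (w x) l = pair x (ψ l)
  mem_roots_iff : ∀ α, ψ α ∈ R.roots ↔ α ∈ R.roots

lemma exists_isRootAdjoint {w : Equiv.Perm (Lat n)} (hw : w ∈ R.weyl) :
    ∃ ψ, R.IsRootAdjoint w ψ := by
  induction hw using Subgroup.closure_induction with
  | mem _ h =>
    obtain ⟨i, rfl⟩ := h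
    have h2 : dotProductBilin ℤ ℤ (R.coroot (R.simple i)) (R.simple i) = 2 :=
      R.pair_coroot_self _ (R.simple_mem i)
    have hrefl (β : Lat n) :
        reflection h2 β = β - pair (R.coroot (R.simple i)) β • R.simple i :=
      Module.reflection_apply _ _
    refine ⟨reflection h2, fun x l ↦ ?_, fun α ↦ ⟨fun h ↦ ?_, fun h ↦ ?_⟩⟩
    · rw [srefl_apply, hrefl]
      simp only [pair_eq_dotProduct, sub_dotProduct, dotProduct_sub, smul_dotProduct,
        dotProduct_smul, smul_eq_mul]
      ring
    · have := R.reflect_mem _ (R.simple_mem i) _ h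
      rwa [← hrefl, involutive_reflection h2 α] at this
    · have := R.reflect_mem _ (R.simple_mem i) _ h
      rwa [← hrefl] at this
  | one => exact ⟨LinearEquiv.refl ℤ _, fun _ _ ↦ rfl, fun _ ↦ Iff.rfl⟩
  | mul u v _ _ hu hv =>
    obtain ⟨ψu, hu⟩ := hu
    obtain ⟨ψv, hv⟩ := hv
    exact ⟨ψu.trans ψv, fun x l ↦ by simp [hu.pair_apply, hv.pair_apply],
      fun α ↦ (hv.mem_roots_iff _).trans (hu.mem_roots_iff α)⟩
  | inv w _ hw =>
    obtain ⟨ψ, hψ⟩ := hw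
    exact ⟨ψ.symm, fun x l ↦ by simpa using (hψ.pair_apply (w⁻¹ x) (ψ.symm l)).symm,
      fun α ↦ by simpa using (hψ.mem_roots_iff (ψ.symm α)).symm⟩

lemma toPi1_apply_of_mem_weyl {w : Equiv.Perm (Lat n)} (hw : w ∈ R.weyl) (x : Lat n) :
    R.toPi1 (w x) = R.toPi1 x := by
  induction hw using Subgroup.closure_induction generalizing x with
  | mem _ h =>
    obtain ⟨i, rfl⟩ := h
    refine (Submodule.Quotient.eq _).2 ?_
    simpa [srefl_apply] using Submodule.neg_mem _
      (smul_mem _ (pair x (R.simple i)) (R.coroot_mem_corootSpan (R.simple_mem i)))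
  | one => rfl
  | mul u v _ _ hu hv => exact (hu _).trans (hv x)
  | inv w _ hw => simpa using (hw (w⁻¹ x)).symm

lemma IsRootAdjoint.apply_coroot_apply {w : Equiv.Perm (Lat n)} {ψ : Lat n ≃ₗ[ℤ] Lat n}
    (hψ : R.IsRootAdjoint w ψ) (hR : R.RootsSeparateCoroots) (hw : w ∈ R.weyl) {μ : Lat n}
    (hμ : μ ∈ R.roots) : w (R.coroot (ψ μ)) = R.coroot μ := by
  have hψμ : ψ μ ∈ R.roots := (hψ.mem_roots_iff μ).2 hμ
  set f := dotProductBilin ℤ ℤ (w (R.coroot (ψ μ)))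
  have hf (ρ : Lat n) : f ρ = pair (R.coroot (ψ μ)) (ψ ρ) := hψ.pair_apply _ ρ
  have hmaps : MapsTo (preReflection μ f) R.roots R.roots := fun ρ hρ ↦ by
    rw [preReflection_apply, hf, Finset.mem_coe, ← hψ.mem_roots_iff, map_sub, map_zsmul]
    exact R.reflect_mem _ hψμ _ ((hψ.mem_roots_iff ρ).2 hρ)
  -- both functionals take the value `2` at `μ` and their reflections preserve the roots
  have heq := Dual.eq_of_preReflection_mapsTo' R.roots.finite_toSet (subset_span hμ)
    ((hf μ).trans (R.pair_coroot_self _ hψμ)) hmaps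
    (g := dotProductBilin ℤ ℤ (R.coroot μ)) (R.pair_coroot_self _ hμ)
    (fun ρ hρ ↦ R.reflect_mem _ hμ _ hρ)
  have hmem : w (R.coroot (ψ μ)) - R.coroot μ ∈ R.corootSpan := by
    have := (Submodule.Quotient.eq _).1 (R.toPi1_apply_of_mem_weyl hw (R.coroot (ψ μ)))
    simpa using add_mem this
      (sub_mem (R.coroot_mem_corootSpan hψμ) (R.coroot_mem_corootSpan hμ))
  rw [← sub_eq_zero]
  refine toQ_injective ((hR _ (toQ_mem_span hmem) fun ρ hρ ↦ ?_).trans (map_zero toQ).symm)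
  have := LinearMap.congr_fun heq ⟨ρ, subset_span hρ⟩
  simp only [LinearMap.dualMap_apply, Submodule.subtype_apply, f,
    dotProductBilin_apply_apply] at this
  rw [toQ_dotProduct_toQ, pair_eq_dotProduct, sub_dotProduct, this, sub_self, Int.cast_zero]

lemma IsRootAdjoint.pair_apply_coroot_ω_nonpos {w : Equiv.Perm (Lat n)}
    {ψ : Lat n ≃ₗ[ℤ] Lat n} (hψ : R.IsRootAdjoint w ψ) (hR : R.RootsSeparateCoroots)
    (hω : ∀ i j, pair (R.coroot (R.simple j)) (ω i) = if i = j then 1 else 0)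
    (hw : w ∈ R.weyl) (hneg : ∀ μ ∈ R.posRoots, ψ μ ∉ R.posRoots) {β : Lat n}
    (hβ : β ∈ R.posRoots) (i : Fin m) : pair (w (R.coroot β)) (ω i) ≤ 0 := by
  have hμ : ψ.symm β ∈ R.roots := by
    simpa using (hψ.mem_roots_iff (ψ.symm β)).1 (by simpa using (R.mem_posRoots.1 hβ).1)
  have := hψ.apply_coroot_apply hR hw hμ
  rw [LinearEquiv.apply_symm_apply] at this
  rw [this]
  exact pair_coroot_ω_nonpos hR hω hμ (fun h ↦ hneg _ h (by simpa using hβ)) i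

lemma IsRootAdjoint.pair_apply_ω_nonpos {w : Equiv.Perm (Lat n)} {ψ : Lat n ≃ₗ[ℤ] Lat n}
    (hψ : R.IsRootAdjoint w ψ) (hR : R.RootsSeparateCoroots)
    (hω : ∀ i j, pair (R.coroot (R.simple j)) (ω i) = if i = j then 1 else 0)
    (hw : w ∈ R.weyl) (hneg : ∀ μ ∈ R.posRoots, ψ μ ∉ R.posRoots) {x : Lat n}
    (hx : x ∈ R.corootSpan) (hxω : ∀ i, 0 ≤ pair x (ω i)) (j : Fin m) :
    pair (w x) (ω j) ≤ 0 := by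
  rw [hψ.pair_apply, eq_sum_pair_ω_of_mem_corootSpan hR hω hx, pair_eq_dotProduct,
    sum_dotProduct]
  refine Finset.sum_nonpos fun i _ ↦ ?_
  rw [smul_dotProduct, smul_eq_mul, ← pair_eq_dotProduct, ← hψ.pair_apply]
  exact mul_nonpos_of_nonneg_of_nonpos (hxω i)
    (hψ.pair_apply_coroot_ω_nonpos hR hω hw hneg (R.simple_mem_posRoots i) j)

lemma IsRootAdjoint.notMem_posRoots_of_pair_pos {w : Equiv.Perm (Lat n)}
    {ψ : Lat n ≃ₗ[ℤ] Lat n} (hψ : R.IsRootAdjoint w ψ) {v : Lat n}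
    (hv : ∀ j, 0 < pair v (R.simple j))
    (hwv : R.IsDominant (-(w v))) {μ : Lat n} (hμ : μ ∈ R.posRoots) : ψ μ ∉ R.posRoots :=
  fun h ↦ (pair_lt_pair_of_mem_posRoots hv hwv hμ h).ne (hψ.pair_apply v μ)

lemma IsRootAdjoint.notMem_posRoots_of_pair_apply_pos {w : Equiv.Perm (Lat n)}
    {ψ : Lat n ≃ₗ[ℤ] Lat n} (hψ : R.IsRootAdjoint w ψ) {x : Lat n} (hx : R.IsDominant (-x))
    (hwx : ∀ j, 0 < pair (w x) (R.simple j)) {μ : Lat n} (hμ : μ ∈ R.posRoots) :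
    ψ μ ∉ R.posRoots :=
  fun h ↦ (pair_lt_pair_of_mem_posRoots hwx hx h hμ).ne' (hψ.pair_apply x μ)

end Weyl

lemma mem_LamGS_self (hγ : R.IsDominant γ) : γ ∈ R.LamGS γ :=
  ⟨hγ, 1, fun _ ↦ 0, by simp⟩

lemma pair_eq_of_cole (hω0orth : ∀ α ∈ R.roots, pair (R.coroot α) ω0 = 0)
    (hω0norm : pair γ ω0 = 1) {v : Lat n} {k : ℕ} (h : R.cole v (k • γ)) :
    pair v ω0 = k := by
  have := pair_eq_zero_of_mem_corootSpan hω0orth (R.mem_corootSpan_of_posCorootComb h)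
  rw [pair_eq_dotProduct, sub_dotProduct, smul_dotProduct, ← pair_eq_dotProduct, hω0norm,
    nsmul_eq_mul, mul_one, sub_eq_zero] at this
  exact this.symm

lemma pair_w0_ω0_nonneg (hw0 : w0 ∈ R.weyl) (hω0orth : ∀ α ∈ R.roots, pair (R.coroot α) ω0 = 0)
    (hω0norm : pair γ ω0 = 1) {v : Lat n} (hv : v ∈ R.LamGS γ) : 0 ≤ pair (w0 v) ω0 := by
  obtain ⟨-, k, hk⟩ := hv
  rw [pair_eq_of_toPi1_eq hω0orth (R.toPi1_apply_of_mem_weyl hw0 v),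
    pair_eq_of_cole hω0orth hω0norm hk]
  positivity

lemma pair_w0_ω_nonneg (hR : R.RootsSeparateCoroots)
    (hω : ∀ i j, pair (R.coroot (R.simple j)) (ω i) = if i = j then 1 else 0)
    (hw0 : w0 ∈ R.weyl) (hw0d : ∀ v : Lat n, R.IsDominant v → R.IsDominant (-(w0 v)))
    (hωw0 : ∀ i, pair (w0 γ) (ω i) = 0) {v : Lat n} (hv : v ∈ R.LamGS γ) (i : Fin m) :
    0 ≤ pair (w0 v) (ω i) := by
  obtain ⟨-, k, hk⟩ := hv
  obtain ⟨ψ, hψ⟩ := exists_isRootAdjoint hw0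
  obtain ⟨u, hu⟩ := exists_pair_simple_pos hR hω
  have hkγv := hψ.pair_apply_ω_nonpos hR hω hw0
    (fun _ ↦ hψ.notMem_posRoots_of_pair_pos hu (hw0d u fun j ↦ (hu j).le))
    (R.mem_corootSpan_of_posCorootComb hk) (PosCorootComb.pair_ω_nonneg hR hω hk) i
  have : pair (w0 v) (ω i) = k * pair (w0 γ) (ω i) - pair (w0 (k • γ - v)) (ω i) := by
    simp only [hψ.pair_apply, pair_eq_dotProduct, sub_dotProduct, smul_dotProduct]
    rw [nsmul_eq_mul]
    ring
  rw [this, hωw0]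
  linarith

lemma smul_add_sum_mem_LamCheckS (hR : R.RootsSeparateCoroots)
    (hω : ∀ i j, pair (R.coroot (R.simple j)) (ω i) = if i = j then 1 else 0)
    (hw0 : w0 ∈ R.weyl) (hw0d : ∀ v : Lat n, R.IsDominant v → R.IsDominant (-(w0 v)))
    (hωw0 : ∀ i, pair (w0 γ) (ω i) = 0) (hω0orth : ∀ α ∈ R.roots, pair (R.coroot α) ω0 = 0)
    (hω0norm : pair γ ω0 = 1) (a : ℕ) (c : Fin m → ℕ) :
    (a : ℤ) • ω0 + ∑ i, (c i : ℤ) • ω i ∈ R.LamCheckS γ w0 := by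
  have hpair (x : Lat n) : pair x ((a : ℤ) • ω0 + ∑ i, (c i : ℤ) • ω i) =
      a * pair x ω0 + ∑ i, c i * pair x (ω i) := by
    simp only [pair_eq_dotProduct, dotProduct_add, dotProduct_sum, dotProduct_smul, smul_eq_mul]
  refine ⟨fun j ↦ ?_, fun v hv ↦ ?_⟩
  · rw [hpair]
    simp [hω0orth _ (R.simple_mem j), hω]
  · rw [hpair]
    exact add_nonneg (mul_nonneg (by positivity) (pair_w0_ω0_nonneg hw0 hω0orth hω0norm hv))
      (Finset.sum_nonneg fun i _ ↦
        mul_nonneg (by positivity) (pair_w0_ω_nonneg hR hω hw0 hw0d hωw0 hv i))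

lemma eq_pair_smul_add_sum (hR : R.RootsSeparateCoroots)
    (hω : ∀ i j, pair (R.coroot (R.simple j)) (ω i) = if i = j then 1 else 0)
    (hω0orth : ∀ α ∈ R.roots, pair (R.coroot α) ω0 = 0) {g : Lat n}
    (hg : ∀ x : R.Pi1, ∃ k : ℤ, x = k • R.toPi1 g) (hgω0 : pair g ω0 = 1)
    (hgω : ∀ i, pair g (ω i) = 0) (l : Lat n) :
    l = pair g l • ω0 + ∑ i, pair (R.coroot (R.simple i)) l • ω i := by
  rw [← sub_eq_zero]
  set d := l - (pair g l • ω0 + ∑ i, pair (R.coroot (R.simple i)) l • ω i)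
  have hpair (x : Lat n) : pair x d = pair x l - (pair g l * pair x ω0 +
      ∑ i, pair (R.coroot (R.simple i)) l * pair x (ω i)) := by
    simp only [d, pair_eq_dotProduct, dotProduct_sub, dotProduct_add, dotProduct_sum,
      dotProduct_smul, smul_eq_mul]
  have hgd : pair g d = 0 := by simp [hpair, hgω0, hgω]
  have hsimple (j : Fin m) : pair (R.coroot (R.simple j)) d = 0 := by
    simp [hpair, hω0orth _ (R.simple_mem j), hω]
  refine dotProduct_eq_zero _ fun x ↦ ?_
  obtain ⟨k, hk⟩ := hg (R.toPi1 x)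
  have hx : x - k • g ∈ R.corootSpan :=
    (Submodule.Quotient.eq _).1 (hk.trans (Submodule.Quotient.mk_smul _ k g).symm)
  rw [dotProduct_comm, ← pair_eq_dotProduct, ← sub_add_cancel x (k • g),
    eq_sum_pair_ω_of_mem_corootSpan hR hω hx]
  rw [pair_eq_dotProduct, add_dotProduct, sum_dotProduct]
  simp only [smul_dotProduct, ← pair_eq_dotProduct, hsimple, hgd, smul_zero,
    Finset.sum_const_zero, zero_add]

lemma exists_eq_sum_of_mem_LamCheckS (hR : R.RootsSeparateCoroots)
    (hω : ∀ i j, pair (R.coroot (R.simple j)) (ω i) = if i = j then 1 else 0)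
    (hw0 : w0 ∈ R.weyl) (hωw0 : ∀ i, pair (w0 γ) (ω i) = 0)
    (hω0orth : ∀ α ∈ R.roots, pair (R.coroot α) ω0 = 0) (hω0norm : pair γ ω0 = 1)
    (hγ : R.IsDominant γ) (hπ : ∀ x : R.Pi1, ∃ k : ℤ, x = k • R.toPi1 γ) {lc : Lat n}
    (hlc : lc ∈ R.LamCheckS γ w0) :
    ∃ (a : ℕ) (c : Fin m → ℕ), lc = (a : ℤ) • ω0 + ∑ i, (c i : ℤ) • ω i := by
  have hw0γ := R.toPi1_apply_of_mem_weyl hw0 γ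
  have hdec := eq_pair_smul_add_sum hR hω hω0orth (g := w0 γ) (by rwa [hw0γ])
    (by rwa [pair_eq_of_toPi1_eq hω0orth hw0γ]) hωw0 lc
  refine ⟨(pair (w0 γ) lc).toNat, fun i ↦ (pair (R.coroot (R.simple i)) lc).toNat, ?_⟩
  rw [Int.toNat_of_nonneg (hlc.2 γ (mem_LamGS_self hγ))]
  simp only [Int.toNat_of_nonneg (hlc.1 _)]
  exact hdec

lemma pair_ω_le_of_pair_w0_ω_nonneg (hR : R.RootsSeparateCoroots)
    (hω : ∀ i j, pair (R.coroot (R.simple j)) (ω i) = if i = j then 1 else 0)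
    (hw0 : w0 ∈ R.weyl) (hw0d : ∀ v : Lat n, R.IsDominant v → R.IsDominant (-(w0 v)))
    (hωw0 : ∀ i, pair (w0 γ) (ω i) = 0) {v : Lat n} {k : ℤ} (hk : R.toPi1 v = R.toPi1 (k • γ))
    (hvω : ∀ i, 0 ≤ pair (w0 v) (ω i)) (j : Fin m) : pair v (ω j) ≤ k * pair γ (ω j) := by
  -- `v - k • γ` is `w₀⁻¹` of `w₀ v - k • w₀ γ`, a nonnegative combination of simple coroots
  have hx : w0 v - k • w0 γ ∈ R.corootSpan := (Submodule.Quotient.eq _).1 <| by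
    change R.toPi1 (w0 v) = R.toPi1 (k • w0 γ)
    rw [R.toPi1_apply_of_mem_weyl hw0, hk, toPi1_zsmul, toPi1_zsmul,
      R.toPi1_apply_of_mem_weyl hw0]
  have hxω (i : Fin m) : 0 ≤ pair (w0 v - k • w0 γ) (ω i) := by
    rw [pair_eq_dotProduct, sub_dotProduct, smul_dotProduct, ← pair_eq_dotProduct,
      ← pair_eq_dotProduct, hωw0, smul_zero, sub_zero]
    exact hvω i
  obtain ⟨ψ, hψ⟩ := exists_isRootAdjoint (inv_mem hw0)
  obtain ⟨u, hu⟩ := exists_pair_simple_pos hR hω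
  have hle := hψ.pair_apply_ω_nonpos hR hω (inv_mem hw0)
    (fun _ ↦ hψ.notMem_posRoots_of_pair_apply_pos (hw0d u fun j ↦ (hu j).le) (by simpa using hu))
    hx hxω j
  have hback (y : Lat n) : pair (w0 y) (ψ (ω j)) = pair y (ω j) := by
    rw [← hψ.pair_apply, Equiv.Perm.inv_eq_iff_eq.2 rfl]
  rw [hψ.pair_apply, pair_eq_dotProduct, sub_dotProduct, smul_dotProduct, ← pair_eq_dotProduct,
    ← pair_eq_dotProduct, hback, hback, smul_eq_mul] at hle
  linarith

lemma mem_LamGS_of_pair_nonneg (hR : R.RootsSeparateCoroots)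
    (hω : ∀ i j, pair (R.coroot (R.simple j)) (ω i) = if i = j then 1 else 0)
    (hw0 : w0 ∈ R.weyl) (hw0d : ∀ v : Lat n, R.IsDominant v → R.IsDominant (-(w0 v)))
    (hωw0 : ∀ i, pair (w0 γ) (ω i) = 0) (hω0orth : ∀ α ∈ R.roots, pair (R.coroot α) ω0 = 0)
    (hω0norm : pair γ ω0 = 1) (hπ : ∀ x : R.Pi1, ∃ k : ℤ, x = k • R.toPi1 γ) {v : Lat n}
    (hv : R.IsDominant v) (hvω0 : 0 ≤ pair (w0 v) ω0) (hvω : ∀ i, 0 ≤ pair (w0 v) (ω i)) :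
    v ∈ R.LamGS γ := by
  obtain ⟨k, hk⟩ := hπ (R.toPi1 v)
  rw [← toPi1_zsmul] at hk
  have hk0 : 0 ≤ k := by
    rwa [pair_eq_of_toPi1_eq hω0orth ((R.toPi1_apply_of_mem_weyl hw0 v).trans hk),
      pair_eq_dotProduct, smul_dotProduct, ← pair_eq_dotProduct, hω0norm, smul_eq_mul,
      mul_one] at hvω0
  have hcoeff (j : Fin m) : 0 ≤ pair (k • γ - v) (ω j) := by
    have := pair_ω_le_of_pair_w0_ω_nonneg hR hω hw0 hw0d hωw0 hk hvω j
    rw [pair_eq_dotProduct, sub_dotProduct, smul_dotProduct, ← pair_eq_dotProduct,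
      ← pair_eq_dotProduct, smul_eq_mul]
    linarith
  have hmem : k • γ - v ∈ R.corootSpan := by
    simpa using R.corootSpan.neg_mem ((Submodule.Quotient.eq _).1 hk)
  refine ⟨hv, k.toNat, ?_⟩
  rw [cole, ← natCast_zsmul, Int.toNat_of_nonneg hk0, eq_sum_pair_ω_of_mem_corootSpan hR hω hmem]
  convert posCorootComb_sum_simple R fun j ↦ (pair (k • γ - v) (ω j)).toNat using 4 with j
  rw [Int.toNat_of_nonneg (hcoeff j)]

end RootDatum

theorem lamCheckS_span_and_lamGS_characterization_general
    {n m : ℕ} (R : RootDatum n m) (γ : Lat n)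
    (hγ : R.IsOneAdmissible γ)
    -- the longest element w₀ of the Weyl group (acting on coweights)
    (w0 : Equiv.Perm (Lat n)) (hw0 : w0 ∈ R.weyl)
    (hw0d : ∀ v : Lat n, R.IsDominant v → R.IsDominant (-(w0 v)))
    -- ω̌₀: the generator of the group of weights orthogonal to all coroots,
    -- normalized by ⟨θ, ω̌₀⟩ = 1 (θ being the image of γ)
    (ω0 : Lat n)
    (hω0orth : ∀ α ∈ R.roots, pair (R.coroot α) ω0 = 0)
    (hω0norm : pair γ ω0 = 1)
    -- ω̌ᵢ: the fundamental weight corresponding to αᵢ with ⟨w₀(γ), ω̌ᵢ⟩ = 0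
    (ω : Fin m → Lat n)
    (hω : ∀ i j, pair (R.coroot (R.simple j)) (ω i) = if i = j then 1 else 0)
    (hωw0 : ∀ i, pair (w0 γ) (ω i) = 0) :
    R.LamCheckS γ w0 =
      {lc | ∃ (a : ℕ) (c : Fin m → ℕ), lc = (a : ℤ) • ω0 + ∑ i, (c i : ℤ) • ω i} ∧
    R.LamGS γ =
      {v | R.IsDominant v ∧ ∀ lc ∈ R.LamCheckS γ w0, 0 ≤ pair (w0 v) lc} := by
  obtain ⟨⟨Z⟩, -, ⟨hγdom, -⟩, hπ, -⟩ := hγ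
  have hR : R.RootsSeparateCoroots := R.rootsSeparateCoroots_of_linearEquiv Z
    (by rintro rfl; simp [pair] at hω0norm) hω0orth
  have hmem := RootDatum.smul_add_sum_mem_LamCheckS hR hω hw0 hw0d hωw0 hω0orth hω0norm
  refine ⟨Set.ext fun lc ↦ ⟨fun hlc ↦ ?_, ?_⟩, Set.ext fun v ↦ ⟨fun hv ↦ ?_, ?_⟩⟩
  · exact RootDatum.exists_eq_sum_of_mem_LamCheckS hR hω hw0 hωw0 hω0orth hω0norm hγdom hπ hlc
  · rintro ⟨a, c, rfl⟩
    exact hmem a c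
  · exact ⟨hv.1, fun lc hlc ↦ hlc.2 v hv⟩
  · rintro ⟨hv, hdual⟩
    refine RootDatum.mem_LamGS_of_pair_nonneg hR hω hw0 hw0d hωw0 hω0orth hω0norm hπ hv
      (hdual _ (by simpa using hmem 1 0)) fun i ↦ hdual _ ?_
    simpa [Pi.single_apply] using hmem 0 (Pi.single i 1)

/-- For a 1-admissible datum `γ`, the semigroup
`Λ̌⁺_S = { λ̌ ∈ Λ̌⁺ : ⟨w₀(λ), λ̌⟩ ≥ 0 for all λ ∈ Λ⁺_{G,S} }` is the `ℤ₊`-span of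
`ω̌₀` and the normalized fundamental weights `ω̌ᵢ`; moreover
`Λ⁺_{G,S} = { λ ∈ Λ⁺ : ⟨w₀(λ), λ̌⟩ ≥ 0 for all λ̌ ∈ Λ̌⁺_S }`. -/
theorem lamCheckS_span_and_lamGS_characterization
    {n m : ℕ} (R : RootDatum n m) (γ : Lat n)
    (hγ : R.IsOneAdmissible γ)
    -- the longest element w₀ of the Weyl group (acting on coweights)
    (w0 : Equiv.Perm (Lat n)) (hw0 : w0 ∈ R.weyl)
    (hw0d : ∀ v : Lat n, R.IsDominant v → R.IsDominant (-(w0 v)))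
    -- ω̌₀: the generator of the group of weights orthogonal to all coroots,
    -- normalized by ⟨θ, ω̌₀⟩ = 1 (θ being the image of γ)
    (ω0 : Lat n)
    (hω0orth : ∀ α ∈ R.roots, pair (R.coroot α) ω0 = 0)
    (hω0gen : ∀ lc : Lat n, (∀ α ∈ R.roots, pair (R.coroot α) lc = 0) → ∃ k : ℤ, lc = k • ω0)
    (hω0norm : pair γ ω0 = 1)
    -- ω̌ᵢ: the fundamental weight corresponding to αᵢ with ⟨w₀(γ), ω̌ᵢ⟩ = 0
    (ω : Fin m → Lat n)
    (hω : ∀ i j, pair (R.coroot (R.simple j)) (ω i) = if i = j then 1 else 0)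
    (hωw0 : ∀ i, pair (w0 γ) (ω i) = 0) :
    R.LamCheckS γ w0 =
      {lc | ∃ (a : ℕ) (c : Fin m → ℕ), lc = (a : ℤ) • ω0 + ∑ i, (c i : ℤ) • ω i} ∧
    R.LamGS γ =
      {v | R.IsDominant v ∧ ∀ lc ∈ R.LamCheckS γ w0, 0 ≤ pair (w0 v) lc} :=
  lamCheckS_span_and_lamGS_characterization_general R γ hγ w0 hw0 hw0d ω0 hω0orth hω0norm ω hω hωw0

end AutSheaf
end

section
/- Let γ be a 1-admissible datum for G. If μ̌ ∈ Λ̌⁺ is a dominant weight, λ̌ ∈ Λ̌⁺_S and μ̌ ≤ λ̌ (i.e., λ̌ − μ̌ is a ℤ₊-combination of simple roots), then μ̌ ∈ Λ̌⁺_S. -/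
open scoped BigOperators

namespace AutSheaf

lemma pair_sub_right {n : ℕ} (l a b : Lat n) :
    pair l (a - b) = pair l a - pair l b := by
  simp [pair, mul_sub, Finset.sum_sub_distrib]

lemma pair_sum_smul {n m : ℕ} (l : Lat n) (c : Fin m → ℕ) (f : Fin m → Lat n) :
    pair l (∑ i, (c i : ℤ) • f i) = ∑ i, (c i : ℤ) * pair l (f i) := by
  simp only [pair, Finset.sum_apply, Pi.smul_apply, smul_eq_mul, Finset.mul_sum]
  rw [Finset.sum_comm]
  congr 1; ext i; congr 1; ext j; ring

/-- If `μ̌ ∈ Λ̌⁺`, `λ̌ ∈ Λ̌⁺_S` and `μ̌ ≤ λ̌` (i.e. `λ̌ - μ̌` is a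
`ℤ₊`-combination of simple roots), then `μ̌ ∈ Λ̌⁺_S`. -/
theorem lamCheckS_downward_closed
    {n m : ℕ} (R : RootDatum n m) (γ : Lat n)
    (hγ : R.IsOneAdmissible γ)
    (w0 : Equiv.Perm (Lat n)) (hw0 : w0 ∈ R.weyl)
    (hw0d : ∀ v : Lat n, R.IsDominant v → R.IsDominant (-(w0 v)))
    (μc lamc : Lat n)
    (hμ : R.IsDominantWeight μc)
    (hlam : lamc ∈ R.LamCheckS γ w0)
    (hle : ∃ c : Fin m → ℕ, lamc - μc = ∑ i, (c i : ℤ) • R.simple i) :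
    μc ∈ R.LamCheckS γ w0 := by
  obtain ⟨hld, hlp⟩ := hlam
  obtain ⟨c, hc⟩ := hle
  refine ⟨hμ, fun v hv => ?_⟩
  have hneg := hw0d v hv.1
  have hterm : ∀ i, pair (w0 v) (R.simple i) ≤ 0 := by
    intro i
    have h := hneg i
    have : pair (-(w0 v)) (R.simple i) = -pair (w0 v) (R.simple i) := by
      simp [pair, neg_mul]
    linarith [h, this ▸ h]
  have h1 : 0 ≤ pair (w0 v) lamc := hlp v hv
  have h2 : pair (w0 v) (lamc - μc) ≤ 0 := by
    rw [hc, pair_sum_smul]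
    apply Finset.sum_nonpos
    intro i _
    exact mul_nonpos_of_nonneg_of_nonpos (Int.ofNat_nonneg _) (hterm i)
  have h3 : pair (w0 v) (lamc - μc) = pair (w0 v) lamc - pair (w0 v) μc :=
    pair_sub_right _ _ _
  linarith

end AutSheaf
end
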